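/- Fix c > 0, α > 0, N ≥ 1 and a residual vector r ∈ ℝ^N. The scale-only Huber criterion σ ↦ Nασ + Σ_{i=1}^N ρ_c(r_i/σ)·σ is convex on (0, ∞), and a point σ̂ > 0 is a global minimizer of this function if and only if (1/N)·Σ_{i=1}^N χ_c(r_i/σ̂) = α. -/

import Mathlib

/-!
Huber's loss is the upper envelope of the parabolas `u * x - u ^ 2 / 2` over `|u| ≤ c`, the one
with `u = ψ_c(x)` touching it at `x`. Hence `σ ↦ ρ_c(r / σ) * σ` is the upper envelope of the
lines `σ ↦ u * r - u ^ 2 * σ / 2`, and the one touching it at `σ` has slope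
`-ψ_c(r / σ) ^ 2 / 2 = -χ_c(r / σ)`. Supporting lines at every point give convexity, and
since their slope `N * α - ∑ χ_c(rᵢ / σ)` depends continuously on `σ`, an interior point
minimizes the criterion exactly when that slope vanishes there.
-/

/-- Huber's loss function with threshold `c`. -/
noncomputable def huberLoss (c x : ℝ) : ℝ :=
  if |x| ≤ c then x ^ 2 / 2 else c * |x| - c ^ 2 / 2

/-- Huber's score function with threshold `c`. -/
noncomputable def huberScore (c x : ℝ) : ℝ :=
  if |x| ≤ c then x else c * Real.sign x

/-- `χ_c(x) = ψ_c(x)·x − ρ_c(x)`. -/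
noncomputable def huberChi (c x : ℝ) : ℝ := huberScore c x * x - huberLoss c x

open Filter Topology

theorem convexOn_of_forall_add_mul_sub_le {𝕜 : Type*} [Field 𝕜] [LinearOrder 𝕜]
    [IsStrictOrderedRing 𝕜] {s : Set 𝕜} {f g : 𝕜 → 𝕜} (hs : Convex 𝕜 s)
    (hfg : ∀ x ∈ s, ∀ y ∈ s, f x + g x * (y - x) ≤ f y) : ConvexOn 𝕜 s f := by
  refine ⟨hs, fun x hx y hy a b ha hb hab => ?_⟩
  have hz : a • x + b • y ∈ s := hs hx hy ha hb hab
  have hx' := mul_le_mul_of_nonneg_left (hfg _ hz x hx) ha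
  have hy' := mul_le_mul_of_nonneg_left (hfg _ hz y hy) hb
  simp only [smul_eq_mul] at hx' hy' ⊢
  generalize hz' : a * x + b * y = z at hx' hy' ⊢
  linear_combination hx' + hy' + (g z * z - f z) * hab - g z * hz'

theorem isMinOn_iff_eq_zero_of_forall_add_mul_sub_le {s : Set ℝ} {f g : ℝ → ℝ} {x : ℝ}
    (hs : s ∈ 𝓝 x) (hfg : ∀ y ∈ s, ∀ z ∈ s, f y + g y * (z - y) ≤ f z)
    (hg : ContinuousAt g x) : IsMinOn f s x ↔ g x = 0 := by
  have hx : x ∈ s := mem_of_mem_nhds hs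
  refine ⟨fun hmin => le_antisymm ?_ ?_, fun hgx y hy => ?_⟩
  · refine le_of_tendsto (hg.mono_left (nhdsWithin_le_nhds (s := Set.Iio x))) ?_
    filter_upwards [nhdsWithin_le_nhds hs, self_mem_nhdsWithin] with y hy hyx
    have : x - y > 0 := sub_pos.2 hyx
    nlinarith [hfg y hy x hx, isMinOn_iff.1 hmin y hy]
  · refine ge_of_tendsto (hg.mono_left (nhdsWithin_le_nhds (s := Set.Ioi x))) ?_
    filter_upwards [nhdsWithin_le_nhds hs, self_mem_nhdsWithin] with y hy hyx
    have : x - y < 0 := sub_neg.2 hyx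
    nlinarith [hfg y hy x hx, isMinOn_iff.1 hmin y hy]
  · simpa [hgx] using hfg x hx y hy

theorem huberScore_eq_max_min {c : ℝ} (hc : 0 ≤ c) (x : ℝ) :
    huberScore c x = max (-c) (min x c) := by
  unfold huberScore
  split_ifs with h
  · rw [abs_le] at h
    rw [min_eq_left h.2, max_eq_right h.1]
  · rw [not_le] at h
    rcases lt_or_gt_of_ne (show x ≠ 0 by rintro rfl; rw [abs_zero] at h; linarith) with hx | hx
    · rw [abs_of_neg hx] at h
      rw [Real.sign_of_neg hx, min_eq_left (by linarith), max_eq_left (by linarith)]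
      ring
    · rw [abs_of_pos hx] at h
      rw [Real.sign_of_pos hx, min_eq_right (by linarith), max_eq_right (by linarith)]
      ring

theorem abs_huberScore_le {c : ℝ} (hc : 0 ≤ c) (x : ℝ) : |huberScore c x| ≤ c := by
  rw [huberScore_eq_max_min hc, abs_le]
  exact ⟨le_max_left _ _, max_le (by linarith) (min_le_right _ _)⟩

theorem continuous_huberScore {c : ℝ} (hc : 0 ≤ c) : Continuous (huberScore c) := by
  simp_rw [funext (huberScore_eq_max_min hc)]
  fun_prop

theorem huberChi_eq_sq_huberScore {c : ℝ} (hc : 0 ≤ c) (x : ℝ) :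
    huberChi c x = huberScore c x ^ 2 / 2 := by
  unfold huberChi huberLoss
  rw [huberScore_eq_max_min hc]
  split_ifs with h
  · rw [abs_le] at h
    rw [min_eq_left h.2, max_eq_right h.1]; ring
  · rw [not_le] at h
    rcases le_or_gt 0 x with hx | hx
    · rw [abs_of_nonneg hx] at h
      rw [abs_of_nonneg hx, min_eq_right h.le, max_eq_right (by linarith)]; ring
    · rw [abs_of_neg hx] at h
      rw [abs_of_neg hx, min_eq_left (by linarith), max_eq_left (by linarith)]; ring

theorem mul_sub_sq_div_two_le_huberLoss {c u : ℝ} (hu : |u| ≤ c) (x : ℝ) :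
    u * x - u ^ 2 / 2 ≤ huberLoss c x := by
  unfold huberLoss
  split_ifs with h
  · nlinarith [sq_nonneg (x - u)]
  · have hux : u * x ≤ |u| * |x| := abs_mul u x ▸ le_abs_self _
    nlinarith [mul_nonneg (sub_nonneg.2 hu) (sub_nonneg.2 (not_le.1 h).le), sq_nonneg (c - |u|),
      sq_abs u]

theorem huberLoss_div_mul_sub_le {c : ℝ} (hc : 0 ≤ c) (r : ℝ) {σ τ : ℝ} (hσ : 0 < σ)
    (hτ : 0 < τ) :
    huberLoss c (r / σ) * σ - huberChi c (r / σ) * (τ - σ) ≤ huberLoss c (r / τ) * τ := by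
  set u := huberScore c (r / σ)
  have hloss : huberLoss c (r / σ) = u * (r / σ) - u ^ 2 / 2 := by
    have := huberChi_eq_sq_huberScore hc (r / σ)
    unfold huberChi at this
    linarith
  have hsupport := mul_le_mul_of_nonneg_right
    (mul_sub_sq_div_two_le_huberLoss (abs_huberScore_le hc (r / σ)) (r / τ)) hτ.le
  rw [huberChi_eq_sq_huberScore hc, hloss]
  field_simp at hsupport ⊢
  linarith

theorem sum_huberLoss_div_mul_add_le {ι : Type*} [Fintype ι] {c : ℝ} (hc : 0 ≤ c) (a : ℝ)
    (r : ι → ℝ) {σ τ : ℝ} (hσ : 0 < σ) (hτ : 0 < τ) :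
    (a * σ + ∑ i, huberLoss c (r i / σ) * σ) +
        (a - ∑ i, huberChi c (r i / σ)) * (τ - σ) ≤
      a * τ + ∑ i, huberLoss c (r i / τ) * τ := by
  have := Finset.sum_le_sum fun i (_ : i ∈ Finset.univ) =>
    huberLoss_div_mul_sub_le hc (r i) hσ hτ
  simp only [Finset.sum_sub_distrib, ← Finset.sum_mul] at this ⊢
  linear_combination this

theorem huberScaleCriterion_convex_and_minimizer_iff_general (c α : ℝ) (hc : 0 < c)
    (N : ℕ) (hN : 1 ≤ N) (r : Fin N → ℝ) :
    ConvexOn ℝ (Set.Ioi (0 : ℝ))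
      (fun σ : ℝ => (N : ℝ) * α * σ + ∑ i, huberLoss c (r i / σ) * σ) ∧
    ∀ shat : ℝ, 0 < shat →
      (IsMinOn (fun σ : ℝ => (N : ℝ) * α * σ + ∑ i, huberLoss c (r i / σ) * σ)
          (Set.Ioi (0 : ℝ)) shat ↔
        (1 / (N : ℝ)) * ∑ i, huberChi c (r i / shat) = α) := by
  have hsupport (σ : ℝ) (hσ : σ ∈ Set.Ioi 0) (τ : ℝ) (hτ : τ ∈ Set.Ioi 0) :=
    sum_huberLoss_div_mul_add_le hc.le (N * α) r hσ hτ
  refine ⟨convexOn_of_forall_add_mul_sub_le (convex_Ioi 0) hsupport, fun shat hshat => ?_⟩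
  have hslope : ContinuousAt (fun σ => N * α - ∑ i, huberChi c (r i / σ)) shat := by
    simp_rw [huberChi_eq_sq_huberScore hc.le]
    have := continuous_huberScore hc.le
    fun_prop (disch := exact hshat.ne')
  rw [isMinOn_iff_eq_zero_of_forall_add_mul_sub_le (Ioi_mem_nhds hshat) hsupport hslope]
  have hN' : (N : ℝ) ≠ 0 := by exact_mod_cast Nat.one_le_iff_ne_zero.1 hN
  rw [sub_eq_zero, one_div, inv_mul_eq_iff_eq_mul₀ hN', eq_comm]

/-- The scale-only Huber criterion `σ ↦ Nασ + Σᵢ ρ_c(rᵢ/σ)·σ` is convex on `(0, ∞)`,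
and `shat > 0` is a global minimizer iff `(1/N)·Σᵢ χ_c(rᵢ/shat) = α`. -/
theorem huberScaleCriterion_convex_and_minimizer_iff (c α : ℝ) (hc : 0 < c) (hα : 0 < α)
    (N : ℕ) (hN : 1 ≤ N) (r : Fin N → ℝ) :
    ConvexOn ℝ (Set.Ioi (0 : ℝ))
      (fun σ : ℝ => (N : ℝ) * α * σ + ∑ i, huberLoss c (r i / σ) * σ) ∧
    ∀ shat : ℝ, 0 < shat →
      (IsMinOn (fun σ : ℝ => (N : ℝ) * α * σ + ∑ i, huberLoss c (r i / σ) * σ)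
          (Set.Ioi (0 : ℝ)) shat ↔
        (1 / (N : ℝ)) * ∑ i, huberChi c (r i / shat) = α) :=
  huberScaleCriterion_convex_and_minimizer_iff_general c α hc N hN r
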